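/- arXiv:2106.07044 — 5 statements merged into one kernel-verified Lean document; each statement's English description precedes it below -/
import Mathlib

section
/- Let D ≥ 1 be an integer and let Y = Σ_{k=1}^D Z_k² where Z_1,…,Z_D are i.i.d. standard real Gaussian random variables (so Y has the chi-squared distribution with D degrees of freedom). Then for every x > 0, P(Y − D ≤ −2√(Dx)) ≤ e^{−x} and P(Y − D ≥ 2√(Dx) + 2x) ≤ e^{−x}. As a consequence, for every y > 0, P(D^{−1/2}|Y − D| ≥ y) ≤ 2·exp(−(1/8)·y·min(y, √D)). -/
/-! Chernoff's bound, with the moment generating function `E exp(tY) = (1 - 2t)^(-D/2)`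
(`t < 1/2`) of the chi-squared law. Writing `x = D s²`, the choice `t = -s` gives the lower
tail through `log (1 + 2s) ≥ 2s - 2s²`, and `t = s / (1 + 2s)` gives the upper tail through
`log y ≤ sinh (log y) = (y - y⁻¹) / 2` at `y = 1 + 2s`. The two-sided bound is the union of the
two tails at `x = y min(y, √D) / 8`, for which `2√(Dx) + 2x ≤ y√D`. -/

open MeasureTheory ProbabilityTheory Real

lemma two_mul_sub_two_mul_sq_le_log_one_add_two_mul {s : ℝ} (hs : 0 ≤ s) :
    2 * s - 2 * s ^ 2 ≤ log (1 + 2 * s) := by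
  refine le_trans ?_ (le_log_one_add_of_nonneg (by positivity : 0 ≤ 2 * s))
  rw [le_div_iff₀ (by positivity)]
  nlinarith [pow_nonneg hs 3]

lemma log_one_add_two_mul_le {s : ℝ} (hs : 0 ≤ s) :
    log (1 + 2 * s) ≤ 2 * s * (1 + s) / (1 + 2 * s) := by
  have hpos : 0 < 1 + 2 * s := by positivity
  have h := self_le_sinh_iff.mpr (log_nonneg (by linarith : (1 : ℝ) ≤ 1 + 2 * s))
  rw [sinh_log hpos] at h
  refine h.trans_eq ?_
  field_simp
  ring

lemma exists_mul_eq_sqrt_mul_and_mul_sq_eq {n x : ℝ} (hn : 0 < n) (hx : 0 ≤ x) :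
    ∃ s, 0 ≤ s ∧ n * s = √(n * x) ∧ n * s ^ 2 = x := by
  refine ⟨√(x / n), sqrt_nonneg _, ?_, ?_⟩
  · rw [show n * x = n ^ 2 * (x / n) by field_simp, sqrt_mul (sq_nonneg n), sqrt_sq hn.le]
  · rw [sq_sqrt (by positivity)]
    field_simp

lemma two_mul_sqrt_mul_add_two_mul_le {n y : ℝ} (hn : 0 ≤ n) (hy : 0 ≤ y) :
    2 * √(n * (y * min y √n / 8)) + 2 * (y * min y √n / 8) ≤ y * √n := by
  have hmy : min y √n ≤ y := min_le_left _ _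
  have hmn : min y √n ≤ √n := min_le_right _ _
  have hm : 0 ≤ min y √n := le_min hy (sqrt_nonneg n)
  have hsqrt : √(n * (y * min y √n / 8)) ≤ 3 / 8 * (y * √n) := by
    rw [sqrt_le_left (by positivity), mul_pow, mul_pow, sq_sqrt hn]
    nlinarith [mul_le_mul_of_nonneg_left hmy hy, mul_nonneg hn (mul_nonneg hy hm)]
  nlinarith [mul_le_mul_of_nonneg_left hmn hy]

lemma gaussianPDFReal_zero_one_mul_exp_mul_sq (t x : ℝ) :
    gaussianPDFReal 0 1 x * exp (t * x ^ 2) = (√(2 * π))⁻¹ * exp (-(1 / 2 - t) * x ^ 2) := by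
  rw [gaussianPDFReal_def, mul_assoc, ← exp_add]
  congr 2
  · simp
  · push_cast; ring

lemma integrable_exp_mul_sq_gaussianReal {t : ℝ} (ht : t < 1 / 2) :
    Integrable (fun x => exp (t * x ^ 2)) (gaussianReal 0 1) := by
  rw [gaussianReal_of_var_ne_zero 0 one_ne_zero, integrable_withDensity_iff
    (measurable_gaussianPDF 0 1) (ae_of_all _ fun _ => gaussianPDF_lt_top)]
  simp_rw [toReal_gaussianPDF, mul_comm (exp _), gaussianPDFReal_zero_one_mul_exp_mul_sq]
  exact (integrable_exp_neg_mul_sq (by linarith)).const_mul _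

lemma mgf_sq_gaussianReal {t : ℝ} (ht : t < 1 / 2) :
    mgf (fun x => x ^ 2) (gaussianReal 0 1) t = (1 - 2 * t) ^ (-(1 / 2) : ℝ) := by
  have h : 0 < 1 - 2 * t := by linarith
  simp_rw [mgf, integral_gaussianReal_eq_integral_smul one_ne_zero, smul_eq_mul,
    gaussianPDFReal_zero_one_mul_exp_mul_sq, integral_const_mul, integral_gaussian,
    rpow_neg h.le, ← sqrt_eq_rpow, ← sqrt_inv]
  rw [← sqrt_mul (by positivity)]
  congr 1
  field_simp

structure HasChiSqMGF {Ω : Type*} [MeasurableSpace Ω] (Y : Ω → ℝ) (P : Measure Ω) (n : ℝ) :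
    Prop where
  integrable_exp_mul : ∀ t < 1 / 2, Integrable (fun ω => exp (t * Y ω)) P
  mgf_eq : ∀ t < 1 / 2, mgf Y P t = (1 - 2 * t) ^ (-n / 2)

theorem ProbabilityTheory.iIndepFun.hasChiSqMGF_sum_sq {Ω ι : Type*} [MeasurableSpace Ω]
    [Fintype ι] {P : Measure Ω} [IsProbabilityMeasure P] {Z : ι → Ω → ℝ}
    (hmeas : ∀ k, Measurable (Z k)) (hlaw : ∀ k, P.map (Z k) = gaussianReal 0 1)
    (hindep : iIndepFun Z P) :
    HasChiSqMGF (fun ω => ∑ k, Z k ω ^ 2) P (Fintype.card ι) := by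
  have hsq : iIndepFun (fun k ω => Z k ω ^ 2) P :=
    hindep.comp (fun _ x => x ^ 2) fun _ => by fun_prop
  have hsum : (fun ω => ∑ k, Z k ω ^ 2) = ∑ k, fun ω => Z k ω ^ 2 := by
    ext ω; simp
  have hmgf (k : ι) (t : ℝ) :
      mgf (fun ω => Z k ω ^ 2) P t = mgf (fun x => x ^ 2) (gaussianReal 0 1) t := by
    rw [← hlaw k, mgf_map (hmeas k).aemeasurable (by fun_prop)]
    rfl
  constructor
  · intro t ht
    have hint (k : ι) : Integrable (fun ω => exp (t * Z k ω ^ 2)) P := by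
      have := integrable_exp_mul_sq_gaussianReal ht
      rwa [← hlaw k, integrable_map_measure (by fun_prop) (hmeas k).aemeasurable] at this
    simpa using hsq.integrable_exp_mul_sum (s := .univ) (fun k => by fun_prop) fun k _ => hint k
  · intro t ht
    rw [hsum, hsq.mgf_sum (fun k => by fun_prop), Finset.prod_congr rfl fun k _ => hmgf k t,
      mgf_sq_gaussianReal ht, Finset.prod_const, Finset.card_univ,
      ← rpow_mul_natCast (by linarith)]
    congr 1
    ring

namespace HasChiSqMGF

variable {Ω : Type*} [MeasurableSpace Ω] {P : Measure Ω} [IsProbabilityMeasure P] {Y : Ω → ℝ}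
  {n : ℝ}

lemma measureReal_le_le (hY : HasChiSqMGF Y P n) (hn : 0 ≤ n) {s : ℝ} (hs : 0 ≤ s) :
    P.real {ω | Y ω ≤ n - 2 * n * s} ≤ exp (-(n * s ^ 2)) := by
  refine (measure_le_le_exp_mul_mgf _ (neg_nonpos.mpr hs)
    (hY.integrable_exp_mul (-s) (by linarith))).trans ?_
  rw [hY.mgf_eq (-s) (by linarith), show 1 - 2 * -s = 1 + 2 * s by ring,
    rpow_def_of_pos (by positivity), ← exp_add, exp_le_exp]
  nlinarith [mul_le_mul_of_nonneg_left (two_mul_sub_two_mul_sq_le_log_one_add_two_mul hs) hn]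

lemma measureReal_ge_le (hY : HasChiSqMGF Y P n) (hn : 0 ≤ n) {s : ℝ} (hs : 0 ≤ s) :
    P.real {ω | n + 2 * n * s + 2 * n * s ^ 2 ≤ Y ω} ≤ exp (-(n * s ^ 2)) := by
  have hpos : 0 < 1 + 2 * s := by positivity
  have ht : s / (1 + 2 * s) < 1 / 2 := by rw [div_lt_iff₀ hpos]; linarith
  refine (measure_ge_le_exp_mul_mgf _ (by positivity) (hY.integrable_exp_mul _ ht)).trans ?_
  rw [hY.mgf_eq _ ht, show 1 - 2 * (s / (1 + 2 * s)) = (1 + 2 * s)⁻¹ by field_simp; ring,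
    rpow_def_of_pos (by positivity), log_inv, ← exp_add, exp_le_exp]
  have hlog := mul_le_mul_of_nonneg_left (log_one_add_two_mul_le hs) hn
  have hexp : -(s / (1 + 2 * s)) * (n + 2 * n * s + 2 * n * s ^ 2)
      + n * (2 * s * (1 + s) / (1 + 2 * s)) / 2 = -(n * s ^ 2) := by
    field_simp
    ring
  linarith

lemma lower_tail (hY : HasChiSqMGF Y P n) (hn : 0 < n) {x : ℝ} (hx : 0 ≤ x) :
    P {ω | Y ω - n ≤ -(2 * √(n * x))} ≤ ENNReal.ofReal (exp (-x)) := by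
  obtain ⟨s, hs, hns, hnss⟩ := exists_mul_eq_sqrt_mul_and_mul_sq_eq hn hx
  calc P {ω | Y ω - n ≤ -(2 * √(n * x))} ≤ P {ω | Y ω ≤ n - 2 * n * s} :=
        measure_mono fun ω hω => by simp only [Set.mem_ofPred_eq] at *; linarith
    _ = ENNReal.ofReal (P.real {ω | Y ω ≤ n - 2 * n * s}) := by rw [ofReal_measureReal]
    _ ≤ ENNReal.ofReal (exp (-x)) :=
        ENNReal.ofReal_le_ofReal (hnss ▸ hY.measureReal_le_le hn.le hs)

lemma upper_tail (hY : HasChiSqMGF Y P n) (hn : 0 < n) {x : ℝ} (hx : 0 ≤ x) :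
    P {ω | 2 * √(n * x) + 2 * x ≤ Y ω - n} ≤ ENNReal.ofReal (exp (-x)) := by
  obtain ⟨s, hs, hns, hnss⟩ := exists_mul_eq_sqrt_mul_and_mul_sq_eq hn hx
  calc P {ω | 2 * √(n * x) + 2 * x ≤ Y ω - n} ≤ P {ω | n + 2 * n * s + 2 * n * s ^ 2 ≤ Y ω} :=
        measure_mono fun ω hω => by simp only [Set.mem_ofPred_eq] at *; linarith
    _ = ENNReal.ofReal (P.real {ω | n + 2 * n * s + 2 * n * s ^ 2 ≤ Y ω}) :=
        by rw [ofReal_measureReal]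
    _ ≤ ENNReal.ofReal (exp (-x)) :=
        ENNReal.ofReal_le_ofReal (hnss ▸ hY.measureReal_ge_le hn.le hs)

lemma abs_sub_tail (hY : HasChiSqMGF Y P n) (hn : 0 < n) {y : ℝ} (hy : 0 < y) :
    P {ω | y ≤ |Y ω - n| / √n} ≤ ENNReal.ofReal (2 * exp (-(1 / 8) * y * min y √n)) := by
  have hbound := two_mul_sqrt_mul_add_two_mul_le hn.le hy.le
  set x := y * min y √n / 8 with hx
  have hx0 : 0 ≤ x := by positivity
  have hsub : {ω | y ≤ |Y ω - n| / √n} ⊆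
      {ω | Y ω - n ≤ -(2 * √(n * x))} ∪ {ω | 2 * √(n * x) + 2 * x ≤ Y ω - n} := by
    intro ω hω
    rw [Set.mem_ofPred_eq, le_div_iff₀ (sqrt_pos.mpr hn)] at hω
    have hsqrt := sqrt_nonneg (n * x)
    rcases le_abs'.mp hω with h | h
    · left; simp only [Set.mem_ofPred_eq]; linarith
    · right; simp only [Set.mem_ofPred_eq]; linarith
  calc P {ω | y ≤ |Y ω - n| / √n}
      ≤ P {ω | Y ω - n ≤ -(2 * √(n * x))} + P {ω | 2 * √(n * x) + 2 * x ≤ Y ω - n} :=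
        (measure_mono hsub).trans (measure_union_le _ _)
    _ ≤ ENNReal.ofReal (exp (-x)) + ENNReal.ofReal (exp (-x)) :=
        add_le_add (hY.lower_tail hn hx0) (hY.upper_tail hn hx0)
    _ = ENNReal.ofReal (2 * exp (-(1 / 8) * y * min y √n)) := by
        rw [← ENNReal.ofReal_add (exp_pos _).le (exp_pos _).le, ← two_mul, hx]
        ring_nf

end HasChiSqMGF

/-- **Lemma 1 (Laurent–Massart chi-squared concentration).** If `Y = Σ_{k=1}^D Z_k²`
with `Z_1,…,Z_D` i.i.d. standard Gaussians, then for every `x > 0`,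
`P(Y − D ≤ −2√(Dx)) ≤ e^{−x}` and `P(Y − D ≥ 2√(Dx) + 2x) ≤ e^{−x}`; consequently,
for every `y > 0`, `P(D^{−1/2}|Y − D| ≥ y) ≤ 2 exp(−(1/8) y min(y, √D))`. -/
theorem chi_squared_concentration {Ω : Type*} [MeasurableSpace Ω]
    (P : Measure Ω) [IsProbabilityMeasure P]
    (D : ℕ) (hD : 1 ≤ D) (Z : Fin D → Ω → ℝ)
    (hmeas : ∀ k, Measurable (Z k))
    (hlaw : ∀ k, P.map (Z k) = gaussianReal 0 1)
    (hindep : iIndepFun Z P) :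
    (∀ x : ℝ, 0 < x →
      P {ω | ∑ k, Z k ω ^ 2 - D ≤ -(2 * Real.sqrt (D * x))} ≤
          ENNReal.ofReal (Real.exp (-x)) ∧
      P {ω | 2 * Real.sqrt (D * x) + 2 * x ≤ ∑ k, Z k ω ^ 2 - D} ≤
          ENNReal.ofReal (Real.exp (-x))) ∧
    ∀ y : ℝ, 0 < y →
      P {ω | y ≤ |∑ k, Z k ω ^ 2 - D| / Real.sqrt D} ≤
        ENNReal.ofReal (2 * Real.exp (-(1/8) * y * min y (Real.sqrt D))) := by
  have hY : HasChiSqMGF (fun ω => ∑ k, Z k ω ^ 2) P D := by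
    simpa using hindep.hasChiSqMGF_sum_sq hmeas hlaw
  have hDpos : (0 : ℝ) < D := by exact_mod_cast hD
  exact ⟨fun x hx => ⟨hY.lower_tail hDpos hx.le, hY.upper_tail hDpos hx.le⟩,
    fun y hy => hY.abs_sub_tail hDpos hy⟩
end

section
/- Let m ≥ 1 and let a_1,…,a_m be real numbers, each at least 1, such that ∏_{k=1}^m a_k ≤ A for some A ≥ 1. Then Σ_{k=1}^m a_k ≤ m + (log A)·max_{1≤k≤m} a_k. -/
/-! From `x - 1 ≤ x log x` and `log x ≥ 0` for `x ≥ 1`, each `a_k - 1` is at most `M log a_k`,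
where `M = max_k a_k`. Summing turns `∑ log a_k` into `log ∏ a_k ≤ log A`. -/

open Real

lemma Finset.sum_sub_one_le_mul_log_prod {ι : Type*} (s : Finset ι) {a : ι → ℝ} {M : ℝ}
    (ha : ∀ i ∈ s, 1 ≤ a i) (hM : ∀ i ∈ s, a i ≤ M) :
    ∑ i ∈ s, (a i - 1) ≤ M * log (∏ i ∈ s, a i) := by
  rw [log_prod fun i hi => (zero_lt_one.trans_le (ha i hi)).ne', Finset.mul_sum]
  gcongr with i hi
  calc a i - 1 ≤ a i * log (a i) := self_sub_one_le_mul_log (zero_le_one.trans (ha i hi))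
    _ ≤ M * log (a i) := by gcongr; exacts [log_nonneg (ha i hi), hM i hi]

theorem sum_le_card_add_log_mul_max_general (m : ℕ) (A : ℝ)
    (a : Fin m → ℝ) (ha : ∀ k, 1 ≤ a k) (hprod : ∏ k, a k ≤ A) :
    ∑ k, a k ≤ m + Real.log A * ⨆ k, a k := by
  set M := ⨆ k, a k
  have hle : ∀ k, a k ≤ M := le_ciSup (Set.finite_range a).bddAbove
  have hM : 0 ≤ M := iSup_nonneg fun k => zero_le_one.trans (ha k)
  have hprod_pos : 0 < ∏ k, a k := Finset.prod_pos fun k _ => zero_lt_one.trans_le (ha k)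
  calc ∑ k, a k = m + ∑ k, (a k - 1) := by simp [Finset.sum_sub_distrib]
    _ ≤ m + M * log (∏ k, a k) := by
      gcongr
      exact Finset.univ.sum_sub_one_le_mul_log_prod (fun k _ => ha k) fun k _ => hle k
    _ ≤ m + log A * M := by rw [mul_comm]; gcongr

/-- **Lemma 4.** If `a_1,…,a_m ≥ 1` and `∏_k a_k ≤ A` with `A ≥ 1`, then
`Σ_k a_k ≤ m + (log A) max_k a_k`. -/
theorem sum_le_card_add_log_mul_max (m : ℕ) (hm : 1 ≤ m) (A : ℝ) (hA : 1 ≤ A)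
    (a : Fin m → ℝ) (ha : ∀ k, 1 ≤ a k) (hprod : ∏ k, a k ≤ A) :
    ∑ k, a k ≤ m + Real.log A * ⨆ k, a k :=
  sum_le_card_add_log_mul_max_general m A a ha hprod
end

section
/- Let n ≥ 1, let X_1,…,X_n and X#_1,…,X#_n be vectors in ℝ^d with X_{π(i)} ≠ X#_i for every π ∈ S_n and every i, and let σ_1,…,σ_n > 0. If the identity permutation is not a minimizer of π ↦ Σ_{i=1}^n log ‖X_{π(i)} − X#_i‖² over S_n, then there exist indices i and j with j ≠ i such that ‖X_i − X#_i‖²/(2σ_i²) ≥ ‖X_j − X#_i‖²/(σ_j² + σ_i²). -/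
/-- **Deterministic inclusion for the LSL estimator.** If `X_{π(i)} ≠ X#_i` for every
permutation `π` and index `i`, and the identity is not a minimizer of
`π ↦ Σ_i log ‖X_{π(i)} − X#_i‖²`, then there exist indices `i ≠ j` with
`‖X_i − X#_i‖²/(2σ_i²) ≥ ‖X_j − X#_i‖²/(σ_j² + σ_i²)`. -/
theorem lsl_error_inclusion (n d : ℕ) (hn : 1 ≤ n)
    (X Xs : Fin n → EuclideanSpace ℝ (Fin d))
    (hne : ∀ (π : Equiv.Perm (Fin n)) (i : Fin n), X (π i) ≠ Xs i)
    (σ : Fin n → ℝ) (hσ : ∀ i, 0 < σ i)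
    (hnotmin : ¬ ∀ π : Equiv.Perm (Fin n),
      ∑ i, Real.log (‖X i - Xs i‖ ^ 2) ≤ ∑ i, Real.log (‖X (π i) - Xs i‖ ^ 2)) :
    ∃ i j : Fin n, j ≠ i ∧
      ‖X j - Xs i‖ ^ 2 / (σ j ^ 2 + σ i ^ 2) ≤ ‖X i - Xs i‖ ^ 2 / (2 * σ i ^ 2) := by
  by_contra hc
  push_neg at hc
  apply hnotmin
  intro π
  have hposb : ∀ i, (0:ℝ) < ‖X (π i) - Xs i‖ ^ 2 := fun i =>
    pow_pos (norm_pos_iff.mpr (sub_ne_zero.mpr (hne π i))) 2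
  have hposa : ∀ i, (0:ℝ) < ‖X i - Xs i‖ ^ 2 := fun i =>
    pow_pos (norm_pos_iff.mpr (sub_ne_zero.mpr (hne (Equiv.refl _) i))) 2
  have key : ∀ i, Real.log (‖X i - Xs i‖ ^ 2) + (Real.log (σ (π i)) - Real.log (σ i))
      ≤ Real.log (‖X (π i) - Xs i‖ ^ 2) := by
    intro i
    by_cases hfix : π i = i
    · rw [hfix]; simp
    · have h := hc i (π i) hfix
      set a := ‖X i - Xs i‖ ^ 2 with ha
      set b := ‖X (π i) - Xs i‖ ^ 2 with hb
      have hap : 0 < a := hposa i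
      have hbp : 0 < b := hposb i
      have hs : 0 < σ i := hσ i
      have ht : 0 < σ (π i) := hσ (π i)
      have hden1 : 0 < σ (π i) ^ 2 + σ i ^ 2 := by positivity
      have hden2 : (0:ℝ) < 2 * σ i ^ 2 := by positivity
      have h1 : a * (σ (π i) ^ 2 + σ i ^ 2) < b * (2 * σ i ^ 2) :=
        (div_lt_div_iff₀ hden2 hden1).mp h
      have hmul : a * σ (π i) ≤ b * σ i := by
        nlinarith [sq_nonneg (σ (π i) - σ i), mul_pos hap ht, mul_pos hbp hs,
          mul_pos hs ht]
      have hlog : Real.log (a * σ (π i)) ≤ Real.log (b * σ i) :=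
        Real.log_le_log (by positivity) hmul
      rw [Real.log_mul (ne_of_gt hap) (ne_of_gt ht),
        Real.log_mul (ne_of_gt hbp) (ne_of_gt hs)] at hlog
      linarith
  have hperm : ∑ i, Real.log (σ (π i)) = ∑ i, Real.log (σ i) :=
    Equiv.sum_comp π (fun i => Real.log (σ i))
  have h0 : ∑ i, (Real.log (σ (π i)) - Real.log (σ i)) = 0 := by
    rw [Finset.sum_sub_distrib, hperm, sub_self]
  calc ∑ i, Real.log (‖X i - Xs i‖ ^ 2)
      = ∑ i, (Real.log (‖X i - Xs i‖ ^ 2) + (Real.log (σ (π i)) - Real.log (σ i))) := by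
        rw [Finset.sum_add_distrib, h0, add_zero]
    _ ≤ ∑ i, Real.log (‖X (π i) - Xs i‖ ^ 2) := Finset.sum_le_sum fun i _ => key i
end

section
/- For every integer n ≥ 2 there exist an integer M ≥ (n/8)^{n/2} and permutations π_0, π_1, …, π_M ∈ S_n with π_0 = id such that for every pair of distinct indices i, j ∈ {0,…,M}, (1/n)·#{k ∈ {1,…,n} : π_i(k) ≠ π_j(k)} ≥ 1/2. -/
/-!
A maximal family of permutations containing the identity with pairwise Hamming distance at
least `n / 2` is a net: every permutation lies within distance `d = ⌊(n - 1) / 2⌋` of it.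
A Hamming ball of radius `d` in `S_n` has at most `C(n, d) · d! = n! / (n - d)!` elements
(choose `d` positions where the permutation may differ from the centre), so the family has at
least `(n - d)! = (⌊n / 2⌋ + 1)!` members. Finally `m! ≥ 2 (m / 4)^m`, from `m^m / m! ≤ e^m`,
dominates `(n / 8)^(n / 2) + 1`.
-/

open Finset Fintype Equiv
open scoped Nat

theorem exists_separated_net {α : Type*} [Fintype α] (r : α → α → Prop) (hrefl : ∀ x, r x x)
    (hsymm : ∀ x y, r x y → r y x) (a : α) :
    ∃ C : Finset α, a ∈ C ∧ (∀ x ∈ C, ∀ y ∈ C, x ≠ y → ¬r x y) ∧ ∀ x, ∃ c ∈ C, r x c := by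
  classical
  let Separated : Finset α → Prop := fun C => a ∈ C ∧ ∀ x ∈ C, ∀ y ∈ C, x ≠ y → ¬r x y
  have hsingleton : Separated {a} := ⟨mem_singleton_self a, by simp +contextual⟩
  obtain ⟨C, hC, hmax⟩ :=
    exists_max_image {C | Separated C} card ⟨{a}, by simpa using hsingleton⟩
  obtain ⟨haC, hsep⟩ : Separated C := by simpa using hC
  refine ⟨C, haC, hsep, fun x => ?_⟩
  by_contra! hfar
  have hxC : x ∉ C := fun hx => hfar x hx (hrefl x)
  have hins : Separated (insert x C) := by
    refine ⟨mem_insert_of_mem haC, ?_⟩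
    simp only [mem_insert]
    rintro y (rfl | hy) z (rfl | hz) hyz
    · exact absurd rfl hyz
    · exact hfar z hz
    · exact fun h => hfar y hy (hsymm _ _ h)
    · exact hsep y hy z hz hyz
  have := hmax _ (by simpa using hins)
  rw [card_insert_of_notMem hxC] at this
  omega

section Permutations

variable {α : Type*} [Fintype α] [DecidableEq α]

theorem card_perm_fixing_compl (S : Finset α) :
    #{σ : Perm α | ∀ a ∉ S, σ a = a} = (#S)! := by
  rw [← Fintype.card_subtype, ← Fintype.card_congr (Perm.subtypeEquivSubtypePerm (· ∈ S)),
    Fintype.card_perm, Fintype.card_coe]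

theorem card_hammingDist_perm_le (π : Perm α) {d : ℕ} (hd : d ≤ card α) :
    #{σ : Perm α | hammingDist ⇑σ ⇑π ≤ d} ≤ (card α).choose d * d ! := by
  have hcover : ({σ : Perm α | hammingDist ⇑σ ⇑π ≤ d} : Finset (Perm α)) ⊆
      (powersetCard d univ).biUnion fun S => {σ : Perm α | ∀ a ∉ S, σ a = π a} := by
    intro σ hσ
    obtain ⟨S, hDS, -, hS⟩ := exists_subsuperset_card_eq (subset_univ {a | σ a ≠ π a})
      (mem_filter.1 hσ).2 (by rwa [Finset.card_univ])
    simp only [mem_biUnion, mem_powersetCard, mem_filter, mem_univ, true_and]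
    exact ⟨S, ⟨subset_univ S, hS⟩, fun a ha => by_contra fun h => ha (hDS (by simpa using h))⟩
  have hpiece (S : Finset α) : #{σ : Perm α | ∀ a ∉ S, σ a = π a} ≤ (#S)! := by
    rw [← card_perm_fixing_compl S]
    refine card_le_card_of_injOn (π⁻¹ * ·) (fun σ hσ => ?_) (mul_right_injective _).injOn
    simp only [coe_filter, Set.mem_ofPred_eq, mem_univ, true_and] at hσ ⊢
    intro a ha
    simp [Perm.mul_apply, hσ a ha]
  calc _ ≤ _ := card_le_card hcover
    _ ≤ ∑ S ∈ powersetCard d (univ : Finset α), #{σ : Perm α | ∀ a ∉ S, σ a = π a} :=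
        card_biUnion_le
    _ ≤ ∑ S ∈ powersetCard d (univ : Finset α), d ! :=
        sum_le_sum fun S hS => (mem_powersetCard.1 hS).2 ▸ hpiece S
    _ = (card α).choose d * d ! := by
        rw [sum_const, card_powersetCard, Finset.card_univ, smul_eq_mul]

theorem exists_perm_code (hα : 0 < card α) :
    ∃ C : Finset (Perm α), 1 ∈ C ∧
      (∀ σ ∈ C, ∀ τ ∈ C, σ ≠ τ → card α ≤ 2 * hammingDist ⇑σ ⇑τ) ∧
      (card α / 2 + 1)! ≤ #C := by
  set N := card α
  obtain ⟨C, hC1, hsep, hnet⟩ :=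
    exists_separated_net (fun σ τ : Perm α => 2 * hammingDist ⇑σ ⇑τ < N)
      (fun _ => by simpa using hα) (fun _ _ h => by rwa [hammingDist_comm] at h) 1
  refine ⟨C, hC1, fun σ hσ τ hτ hστ => not_lt.1 (hsep σ hσ τ hτ hστ), ?_⟩
  set d := (N - 1) / 2
  have hd : d ≤ N := by omega
  have hcount : N ! ≤ #C * (N.choose d * d !) := calc
    N ! = #(univ : Finset (Perm α)) := by rw [Finset.card_univ, Fintype.card_perm]
    _ ≤ #(C.biUnion fun π => {σ : Perm α | hammingDist ⇑σ ⇑π ≤ d}) :=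
      card_le_card fun σ _ => by
        obtain ⟨π, hπ, hσπ⟩ := hnet σ
        exact mem_biUnion.2 ⟨π, hπ, mem_filter.2 ⟨mem_univ σ, by omega⟩⟩
    _ ≤ ∑ π ∈ C, #{σ : Perm α | hammingDist ⇑σ ⇑π ≤ d} := card_biUnion_le
    _ ≤ #C * (N.choose d * d !) := by
        simpa using sum_le_sum fun π _ => card_hammingDist_perm_le π hd
  have hNd : N - d = N / 2 + 1 := by omega
  rw [← Nat.choose_mul_factorial_mul_factorial hd, hNd, mul_comm] at hcount
  exact Nat.le_of_mul_le_mul_right hcount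
    (Nat.mul_pos (Nat.choose_pos hd) (Nat.factorial_pos d))

end Permutations

theorem two_mul_div_four_pow_le_factorial {m : ℕ} (hm : 2 ≤ m) :
    2 * ((m : ℝ) / 4) ^ m ≤ m ! := by
  have hpow : (m : ℝ) ^ m ≤ m ! * Real.exp 1 ^ m := by
    have := Real.pow_div_factorial_le_exp (m : ℝ) (Nat.cast_nonneg m) m
    rwa [div_le_iff₀ (by positivity), mul_comm, ← Real.exp_one_pow] at this
  have he : 2 * Real.exp 1 ^ m ≤ 4 ^ m := by
    have he2 : 2 * Real.exp 1 ^ 2 ≤ 4 ^ 2 := by nlinarith [Real.exp_one_lt_d9, Real.exp_pos 1]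
    obtain ⟨k, rfl⟩ := Nat.exists_eq_add_of_le hm
    rw [pow_add, pow_add, ← mul_assoc]
    gcongr
    linarith [Real.exp_one_lt_d9]
  calc 2 * ((m : ℝ) / 4) ^ m = 2 * (m : ℝ) ^ m / 4 ^ m := by rw [div_pow, mul_div_assoc]
    _ ≤ 2 * (m ! * Real.exp 1 ^ m) / 4 ^ m := by gcongr
    _ = m ! * (2 * Real.exp 1 ^ m) / 4 ^ m := by ring
    _ ≤ m ! * 4 ^ m / 4 ^ m := by gcongr
    _ = m ! := by field_simp

theorem div_eight_rpow_add_one_le_factorial {n : ℕ} (hn : 2 ≤ n) :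
    ((n : ℝ) / 8) ^ ((n : ℝ) / 2) + 1 ≤ (n / 2 + 1)! := by
  set m := n / 2 + 1
  have hnm : (n : ℝ) ≤ 2 * m := by norm_cast; omega
  rcases le_or_gt n 8 with hsmall | hlarge
  · have hle : ((n : ℝ) / 8) ^ ((n : ℝ) / 2) ≤ 1 :=
      Real.rpow_le_one (by positivity)
        (by rw [div_le_one₀ (by norm_num)]; exact_mod_cast hsmall) (by positivity)
    have : (2 : ℝ) ≤ m ! := by exact_mod_cast (by omega : 2 ≤ m).trans (Nat.self_le_factorial m)
    linarith
  · have hm : (4 : ℝ) ≤ m := by norm_cast; omega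
    have hone : (1 : ℝ) ≤ (m / 4) ^ m := one_le_pow₀ (by rw [le_div_iff₀ (by norm_num)]; linarith)
    have hbase : ((n : ℝ) / 8) ^ ((n : ℝ) / 2) ≤ (m / 4) ^ m := calc
      ((n : ℝ) / 8) ^ ((n : ℝ) / 2) ≤ ((n : ℝ) / 8) ^ (m : ℝ) :=
        Real.rpow_le_rpow_of_exponent_le (by rw [le_div_iff₀ (by norm_num)]; norm_cast; omega)
          (by linarith)
      _ = ((n : ℝ) / 8) ^ m := Real.rpow_natCast _ m
      _ ≤ (m / 4) ^ m := pow_le_pow_left₀ (by positivity) (by linarith) m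
    linarith [two_mul_div_four_pow_le_factorial (by omega : 2 ≤ m)]

theorem Finset.exists_injective_fin_zero_eq {β : Type*} {s : Finset β} {a : β} (ha : a ∈ s)
    {M : ℕ} (hs : #s = M + 1) :
    ∃ f : Fin (M + 1) → β, Function.Injective f ∧ (∀ i, f i ∈ s) ∧ f 0 = a := by
  let e : Fin (M + 1) ≃ s := (s.equivFin.trans (finCongr hs)).symm
  refine ⟨fun i => e (Equiv.swap 0 (e.symm ⟨a, ha⟩) i), ?_, fun i => (e _).2, by simp⟩
  exact Subtype.val_injective.comp (e.injective.comp (Equiv.injective _))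

/-- **Lemma 6 (well-separated permutations).** For every `n ≥ 2` there exist
`M ≥ (n/8)^{n/2}` and permutations `π_0 = id, π_1, …, π_M ∈ S_n` such that any two
distinct ones differ in at least half of the positions. -/
theorem exists_separated_permutations (n : ℕ) (hn : 2 ≤ n) :
    ∃ (M : ℕ) (π : Fin (M + 1) → Equiv.Perm (Fin n)),
      ((n : ℝ) / 8) ^ ((n : ℝ) / 2) ≤ (M : ℝ) ∧ π 0 = 1 ∧
      ∀ i j : Fin (M + 1), i ≠ j →
        (1 : ℝ) / 2 ≤
          ((Finset.univ.filter fun k => π i k ≠ π j k).card : ℝ) / n := by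
  obtain ⟨C, hC1, hsep, hcard⟩ := exists_perm_code (α := Fin n) (by rw [Fintype.card_fin]; omega)
  rw [Fintype.card_fin] at hsep hcard
  have hC : #C = (#C - 1) + 1 := (Nat.succ_pred_eq_of_pos (card_pos.2 ⟨1, hC1⟩)).symm
  obtain ⟨π, hπ_inj, hπ_mem, hπ0⟩ := exists_injective_fin_zero_eq hC1 hC
  refine ⟨#C - 1, π, ?_, hπ0, fun i j hij => ?_⟩
  · have hM : ((n / 2 + 1)! : ℝ) ≤ (#C - 1 : ℕ) + 1 := by exact_mod_cast hC ▸ hcard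
    linarith [div_eight_rpow_add_one_le_factorial hn]
  · have hfar : (n : ℝ) ≤ 2 * hammingDist ⇑(π i) ⇑(π j) := by
      exact_mod_cast hsep _ (hπ_mem i) _ (hπ_mem j) (hπ_inj.ne hij)
    rw [hammingDist] at hfar
    rw [le_div_iff₀ (by positivity)]
    linarith
end

section
/- Let n ≥ 2 be an integer and let m be the smallest integer with 2m ≥ n (that is, m = ⌈n/2⌉). Then the number of permutations π ∈ S_n whose number of non-fixed points satisfies #{k : π(k) ≠ k} < n/2 is at most 4·n!/m!. -/
open Finset

/-- **Lemma 7 (counting permutations with few non-fixed points).** For `n ≥ 2` and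
`m = ⌈n/2⌉`, the number of permutations of `{1,…,n}` having fewer than `n/2` non-fixed
points is at most `4 n!/m!`. -/
theorem card_perm_few_nonfixed_le (n : ℕ) (hn : 2 ≤ n) :
    ((Finset.univ.filter fun π : Equiv.Perm (Fin n) =>
        2 * (Finset.univ.filter fun k => π k ≠ k).card < n).card : ℝ)
      ≤ 4 * (Nat.factorial n : ℝ) / (Nat.factorial ((n + 1) / 2) : ℝ) := by
  set m := (n + 1) / 2 with hm
  have hmn : m ≤ n := by omega
  set A := (Finset.univ.filter fun π : Equiv.Perm (Fin n) =>
        2 * (Finset.univ.filter fun k => π k ≠ k).card < n) with hA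
  -- cover A by sets of permutations fixing an m-subset pointwise
  have hsub : A ⊆ (Finset.univ.powersetCard m).biUnion
      (fun F => Finset.univ.filter fun π : Equiv.Perm (Fin n) => ∀ x ∈ F, π x = x) := by
    intro π hπ
    rw [hA, mem_filter] at hπ
    have hπ2 := hπ.2
    have hfix : m ≤ (Finset.univ.filter fun k => π k = k).card := by
      have h := Finset.card_filter_add_card_filter_not
        (s := (Finset.univ : Finset (Fin n))) (p := fun k => π k = k)
      rw [Finset.card_univ, Fintype.card_fin] at h
      have heq : (Finset.univ.filter fun k => ¬ π k = k)
          = (Finset.univ.filter fun k => π k ≠ k) := rfl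
      rw [heq] at h
      omega
    obtain ⟨F, hFsub, hFcard⟩ := Finset.exists_subset_card_eq hfix
    refine Finset.mem_biUnion.2 ⟨F, ?_, ?_⟩
    · simp [Finset.mem_powersetCard, hFcard]
    · simp only [mem_filter, mem_univ, true_and]
      intro x hx
      exact (Finset.mem_filter.1 (hFsub hx)).2
  -- each piece has cardinality (n-m)!
  have hcardB : ∀ F ∈ Finset.univ.powersetCard m,
      (Finset.univ.filter fun π : Equiv.Perm (Fin n) => ∀ x ∈ F, π x = x).card
        = Nat.factorial (n - m) := by
    intro F hF
    have hFcard : F.card = m := (Finset.mem_powersetCard.1 hF).2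
    have key : (Finset.univ.filter fun π : Equiv.Perm (Fin n) => ∀ x ∈ F, π x = x).card
        = Fintype.card {σ : Equiv.Perm (Fin n) // ∀ x ∈ F, σ x = x} :=
      (Fintype.card_subtype _).symm
    have e : {σ : Equiv.Perm (Fin n) // ∀ x ∈ F, σ x = x}
        ≃ Equiv.Perm {x : Fin n // x ∉ F} := by
      refine (Equiv.subtypeEquivRight ?_).trans
        (Equiv.Perm.subtypeEquivSubtypePerm (fun x => x ∉ F)).symm
      intro σ
      constructor
      · intro h a ha; exact h a (not_not.1 ha)
      · intro h a ha; exact h a (not_not.2 ha)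
    have hcompl : Fintype.card {x : Fin n // x ∉ F} = n - m := by
      have : Fintype.card {x : Fin n // x ∈ F} = m := by
        rw [Fintype.card_coe]; exact hFcard
      rw [Fintype.card_subtype_compl, this, Fintype.card_fin]
    rw [key, Fintype.card_congr e, Fintype.card_perm, hcompl]
  -- total bound in ℕ
  have hAcard : A.card ≤ Nat.choose n m * Nat.factorial (n - m) := by
    calc A.card ≤ ((Finset.univ.powersetCard m).biUnion
          (fun F => Finset.univ.filter fun π : Equiv.Perm (Fin n) => ∀ x ∈ F, π x = x)).card :=
          Finset.card_le_card hsub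
      _ ≤ ∑ F ∈ Finset.univ.powersetCard m,
          (Finset.univ.filter fun π : Equiv.Perm (Fin n) => ∀ x ∈ F, π x = x).card :=
          Finset.card_biUnion_le
      _ = ∑ F ∈ Finset.univ.powersetCard m, Nat.factorial (n - m) :=
          Finset.sum_congr rfl hcardB
      _ = (Finset.univ.powersetCard m).card * Nat.factorial (n - m) := by
          rw [Finset.sum_const, smul_eq_mul]
      _ = Nat.choose n m * Nat.factorial (n - m) := by
          rw [Finset.card_powersetCard, Finset.card_univ, Fintype.card_fin]
  have hnat : A.card * Nat.factorial m ≤ 4 * Nat.factorial n := by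
    have h1 : Nat.choose n m * Nat.factorial (n - m) * Nat.factorial m = Nat.factorial n := by
      have := Nat.choose_mul_factorial_mul_factorial hmn
      ring_nf
      ring_nf at this
      linarith [this]
    calc A.card * Nat.factorial m ≤ Nat.choose n m * Nat.factorial (n - m) * Nat.factorial m :=
          Nat.mul_le_mul_right _ hAcard
      _ = Nat.factorial n := h1
      _ ≤ 4 * Nat.factorial n := by omega
  have hm0 : (0 : ℝ) < (Nat.factorial m : ℝ) := by
    exact_mod_cast Nat.factorial_pos m
  rw [le_div_iff₀ hm0]
  calc (A.card : ℝ) * (Nat.factorial m : ℝ) = ((A.card * Nat.factorial m : ℕ) : ℝ) := by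
        push_cast; ring
    _ ≤ ((4 * Nat.factorial n : ℕ) : ℝ) := by exact_mod_cast hnat
    _ = 4 * (Nat.factorial n : ℝ) := by push_cast; ring
end
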